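/- For any Kleinian group G and any κ ∈ [0,1], the Hausdorff dimension of the limit set L_r^{(κ)}(G) satisfies dim_H L_r^{(κ)}(G) ≤ (1 + κ) δ(G), where δ(G) is the critical exponent of G. -/

import Mathlib

open Metric Filter MeasureTheory Set

noncomputable section

/-- Points of `ℝ^{n+1}`, the ambient space of the Poincaré ball model. -/
abbrev Pt (n : ℕ) := EuclideanSpace ℝ (Fin (n + 1))

/-- The open unit ball `𝔹^{n+1}`, the Poincaré ball model of hyperbolic space. -/
def Ball (n : ℕ) : Set (Pt n) := Metric.ball 0 1

/-- The boundary sphere `S^n`. -/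
def Sph (n : ℕ) : Set (Pt n) := Metric.sphere 0 1

/-- Inverse hyperbolic cosine. -/
def arcosh (x : ℝ) : ℝ := Real.log (x + Real.sqrt (x ^ 2 - 1))

/-- The hyperbolic distance in the Poincaré ball model. -/
def hDist {n : ℕ} (x y : Pt n) : ℝ :=
  arcosh (1 + 2 * dist x y ^ 2 / ((1 - ‖x‖ ^ 2) * (1 - ‖y‖ ^ 2)))

/-- A Kleinian group: a subgroup of bijections of `ℝ^{n+1}` acting on the ball
as hyperbolic isometries (extending continuously to the closed ball, preserving the
boundary sphere), which is discrete (orbits meet hyperbolic balls in finitely many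
group elements). -/
def IsKleinian {n : ℕ} (G : Subgroup (Equiv.Perm (Pt n))) : Prop :=
  (∀ g ∈ G, Set.MapsTo (⇑g) (Ball n) (Ball n)) ∧
  (∀ g ∈ G, Set.MapsTo (⇑g) (Sph n) (Sph n)) ∧
  (∀ g ∈ G, ContinuousOn (⇑g) (Metric.closedBall 0 1)) ∧
  (∀ g ∈ G, ∀ x ∈ Ball n, ∀ y ∈ Ball n, hDist (g x) (g y) = hDist x y) ∧
  (∀ R : ℝ, {g : G | hDist ((g : Equiv.Perm (Pt n)) 0) 0 ≤ R}.Finite)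

/-- The limit set `L(G)`: accumulation points on the sphere of the orbit of the origin. -/
def limitSet {n : ℕ} (G : Subgroup (Equiv.Perm (Pt n))) : Set (Pt n) :=
  {ξ | ξ ∈ Sph n ∧ ∃ u : ℕ → G,
    Filter.Tendsto (fun k => (u k : Equiv.Perm (Pt n)) 0) Filter.atTop (nhds ξ)}

/-- The Busemann function based at `ξ ∈ S^n`, normalized to vanish at the origin;
its sublevel sets are the horoballs tangent at `ξ`. -/
def busemann {n : ℕ} (ξ x : Pt n) : ℝ := Real.log (dist x ξ ^ 2 / (1 - ‖x‖ ^ 2))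

/-- The horospheric limit set `L_h(G)`: every horoball tangent at `ξ` meets the orbit. -/
def horoLimitSet {n : ℕ} (G : Subgroup (Equiv.Perm (Pt n))) : Set (Pt n) :=
  {ξ | ξ ∈ Sph n ∧ ∀ c : ℝ, ∃ g ∈ G, busemann ξ (g 0) < c}

/-- The big horospheric limit set `L_H(G)`: some horoball tangent at `ξ` contains
infinitely many orbit points. -/
def bigHoroLimitSet {n : ℕ} (G : Subgroup (Equiv.Perm (Pt n))) : Set (Pt n) :=
  {ξ | ξ ∈ Sph n ∧ ∃ c : ℝ,
    {g : G | busemann ξ ((g : Equiv.Perm (Pt n)) 0) < c}.Infinite}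

/-- The unit-speed geodesic ray from the origin towards `ξ ∈ S^n`. -/
def geoRay {n : ℕ} (ξ : Pt n) (t : ℝ) : Pt n := Real.tanh (t / 2) • ξ

/-- `φ_ξ(t)`: the distance from the orbit `G·0` to the point at time `t` on the
geodesic ray towards `ξ`. -/
def phi {n : ℕ} (G : Subgroup (Equiv.Perm (Pt n))) (ξ : Pt n) (t : ℝ) : ℝ :=
  ⨅ g : G, hDist ((g : Equiv.Perm (Pt n)) 0) (geoRay ξ t)

/-- The radial limit set `L_r(G)`: infinitely many orbit points within bounded
distance of the geodesic ray towards `ξ`. -/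
def radialLimitSet {n : ℕ} (G : Subgroup (Equiv.Perm (Pt n))) : Set (Pt n) :=
  {ξ | ξ ∈ Sph n ∧ ∃ c : ℝ,
    {g : G | ∃ t : ℝ, 0 ≤ t ∧ hDist ((g : Equiv.Perm (Pt n)) 0) (geoRay ξ t) ≤ c}.Infinite}

/-- `Λ_κ(G)`: endpoints of geodesic rays escaping with rate at most `κ` in the
liminf sense. -/
def LambdaSet {n : ℕ} (G : Subgroup (Equiv.Perm (Pt n))) (κ : ℝ) : Set (Pt n) :=
  {ξ | ξ ∈ Sph n ∧ Filter.liminf (fun t : ℝ => phi G ξ t / t) Filter.atTop ≤ κ}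

/-- The strong sublinear growth limit set `Λ_*(G)`. -/
def LambdaStar {n : ℕ} (G : Subgroup (Equiv.Perm (Pt n))) : Set (Pt n) :=
  {ξ | ξ ∈ Sph n ∧ Filter.Tendsto (fun t : ℝ => phi G ξ t / t) Filter.atTop (nhds 0)}

/-- The shadow `I(w : c, α) = {ξ : |ξ - w/|w|| < c (1-|w|)^α}`. -/
def Ishadow {n : ℕ} (w : Pt n) (c α : ℝ) : Set (Pt n) :=
  {ξ | dist ξ ((‖w‖)⁻¹ • w) < c * (1 - ‖w‖) ^ α}

/-- The κ-shadow limit set `L_r^{(κ)}(G) = ⋃_{c>0} limsup_g I(g·0 : c, 1/(1+κ))`. -/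
def shadowLimitSet {n : ℕ} (G : Subgroup (Equiv.Perm (Pt n))) (κ : ℝ) : Set (Pt n) :=
  {ξ | ξ ∈ Sph n ∧ ∃ c : ℝ, 0 < c ∧
    {g : G | ξ ∈ Ishadow ((g : Equiv.Perm (Pt n)) 0) c (1 / (1 + κ))}.Infinite}

/-- The Myrberg limit set `L_M(G)`: the `G`-images of the geodesic ray towards `ξ`
approximate every geodesic with both endpoints in `L(G)` (expressed via convergence
of the endpoints). -/
def myrbergLimitSet {n : ℕ} (G : Subgroup (Equiv.Perm (Pt n))) : Set (Pt n) :=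
  {ξ | ξ ∈ limitSet G ∧ ∀ x ∈ limitSet G, ∀ y ∈ limitSet G, x ≠ y →
    ∃ u : ℕ → G,
      Filter.Tendsto (fun k => (u k : Equiv.Perm (Pt n)) 0) Filter.atTop (nhds x) ∧
      Filter.Tendsto (fun k => (u k : Equiv.Perm (Pt n)) ξ) Filter.atTop (nhds y)}

/-- Summability of the Poincaré series of `G` with exponent `s` (basepoint the origin). -/
def poincareSummable {n : ℕ} (G : Subgroup (Equiv.Perm (Pt n))) (s : ℝ) : Prop :=
  Summable (fun g : G => Real.exp (-s * hDist ((g : Equiv.Perm (Pt n)) 0) 0))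

/-- The critical exponent `δ(G)`. -/
def critExp {n : ℕ} (G : Subgroup (Equiv.Perm (Pt n))) : ℝ :=
  sInf {s : ℝ | 0 < s ∧ poincareSummable G s}

/-- `G` is of divergence type: the Poincaré series diverges at the critical exponent. -/
def IsDivergenceType {n : ℕ} (G : Subgroup (Equiv.Perm (Pt n))) : Prop :=
  ¬ poincareSummable G (critExp G)

/-- The conformal derivative `|g'(ξ)|` of a Möbius transformation of the ball at a
boundary point, given by the Poisson-kernel formula. -/
def confDeriv {n : ℕ} (g : Equiv.Perm (Pt n)) (ξ : Pt n) : ℝ :=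
  (1 - ‖g.symm 0‖ ^ 2) / dist (g.symm 0) ξ ^ 2

/-- A `G`-invariant conformal measure of dimension `s` on the sphere:
`μ(g A) = ∫_A |g'|^s dμ` for all `g ∈ G`. -/
def IsConformalMeasure {n : ℕ} (G : Subgroup (Equiv.Perm (Pt n))) (s : ℝ)
    (μ : Measure (Pt n)) : Prop :=
  IsFiniteMeasure μ ∧ μ ((Sph n)ᶜ) = 0 ∧
  ∀ g ∈ G, ∀ A : Set (Pt n), MeasurableSet A →
    μ (⇑g '' A) = ENNReal.ofReal (∫ ξ in A, confDeriv g ξ ^ s ∂μ)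

/-- `G` is non-elementary: the limit set contains more than two points. -/
def IsNonelementary {n : ℕ} (G : Subgroup (Equiv.Perm (Pt n))) : Prop :=
  ∃ x ∈ limitSet G, ∃ y ∈ limitSet G, ∃ z ∈ limitSet G, x ≠ y ∧ x ≠ z ∧ y ≠ z

/-- `N` is a normal subgroup of `G`. -/
def IsNormalIn {n : ℕ} (N G : Subgroup (Equiv.Perm (Pt n))) : Prop :=
  N ≤ G ∧ ∀ g ∈ G, ∀ h ∈ N, g * h * g⁻¹ ∈ N

/-! ### Auxiliary lemmas -/

section Aux

lemma arcosh_nonneg' {x : ℝ} (hx : 1 ≤ x) : 0 ≤ arcosh x := by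
  have h := Real.sqrt_nonneg (x ^ 2 - 1)
  exact Real.log_nonneg (by linarith)

lemma log_le_arcosh {x : ℝ} (hx : 1 ≤ x) : Real.log x ≤ arcosh x := by
  have h := Real.sqrt_nonneg (x ^ 2 - 1)
  exact Real.log_le_log (by linarith) (by linarith)

lemma arcosh_le_log {x : ℝ} (hx : 1 ≤ x) : arcosh x ≤ Real.log (2 * x) := by
  have h : Real.sqrt (x ^ 2 - 1) ≤ x := by
    calc Real.sqrt (x ^ 2 - 1) ≤ Real.sqrt (x ^ 2) := Real.sqrt_le_sqrt (by nlinarith)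
    _ = x := Real.sqrt_sq (by linarith)
  exact Real.log_le_log (by nlinarith [Real.sqrt_nonneg (x ^ 2 - 1)]) (by linarith)

lemma arcosh_le_two {x : ℝ} (hx : 1 ≤ x) (hx' : x ≤ 5 / 2) : arcosh x ≤ 2 := by
  refine (arcosh_le_log hx).trans ?_
  have h5 : (2 : ℝ) * x ≤ 5 := by linarith
  have hlog : Real.log (2 * x) ≤ Real.log 5 := Real.log_le_log (by linarith) h5
  refine hlog.trans ?_
  have he : (2.7182818283 : ℝ) < Real.exp 1 := Real.exp_one_gt_d9
  have hexp2 : (5 : ℝ) ≤ Real.exp 2 := by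
    have : Real.exp 2 = Real.exp 1 * Real.exp 1 := by
      rw [← Real.exp_add]; norm_num
    nlinarith [Real.exp_pos 1]
  calc Real.log 5 ≤ Real.log (Real.exp 2) := Real.log_le_log (by norm_num) hexp2
  _ = 2 := Real.log_exp 2

lemma hDist_zero_eq {n : ℕ} {w : Pt n} (hw : ‖w‖ < 1) :
    hDist w 0 = arcosh ((1 + ‖w‖ ^ 2) / (1 - ‖w‖ ^ 2)) := by
  have h0 : (0 : ℝ) ≤ ‖w‖ := norm_nonneg w
  have h1 : (0 : ℝ) < 1 - ‖w‖ ^ 2 := by nlinarith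
  unfold hDist
  rw [dist_zero_right, norm_zero]
  congr 1
  field_simp
  ring

/-- Basic estimates relating `hDist w 0` to `1 - ‖w‖`. -/
lemma hDist_est {n : ℕ} {w : Pt n} (hw : ‖w‖ < 1) :
    0 ≤ hDist w 0 ∧ Real.exp (-hDist w 0) ≤ 2 * (1 - ‖w‖) ∧
      1 - ‖w‖ ≤ 4 * Real.exp (-hDist w 0) := by
  have h0 : (0 : ℝ) ≤ ‖w‖ := norm_nonneg w
  set r := ‖w‖ with hr
  have h1 : (0 : ℝ) < 1 - r ^ 2 := by nlinarith
  have h2 : (0 : ℝ) < 1 + r ^ 2 := by positivity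
  set x := (1 + r ^ 2) / (1 - r ^ 2) with hxdef
  have hxpos : 0 < x := by positivity
  have hx1 : 1 ≤ x := by rw [hxdef, le_div_iff₀ h1]; nlinarith
  have hxeq : x * (1 - r ^ 2) = 1 + r ^ 2 := by
    rw [hxdef]; field_simp
  have hd : hDist w 0 = arcosh x := hDist_zero_eq hw
  have hdnn : 0 ≤ hDist w 0 := hd ▸ arcosh_nonneg' hx1
  refine ⟨hdnn, ?_, ?_⟩
  · have hlog : Real.log x ≤ hDist w 0 := hd ▸ log_le_arcosh hx1
    have hE : Real.exp (-hDist w 0) ≤ x⁻¹ := by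
      have : Real.exp (-hDist w 0) ≤ Real.exp (-(Real.log x)) :=
        Real.exp_le_exp.mpr (by linarith)
      rwa [Real.exp_neg (Real.log x), Real.exp_log hxpos] at this
    refine hE.trans ?_
    have h8 : 1 ≤ 2 * (1 - r) * x := by
      have h9 : 2 * (1 - r) * x * (1 - r ^ 2) = 2 * (1 - r) * (1 + r ^ 2) := by
        rw [mul_assoc, hxeq]
      nlinarith [sq_nonneg r, sq_nonneg (1 - r)]
    have hcalc : x⁻¹ * (2 * (1 - r) * x) = 2 * (1 - r) := by
      field_simp
    calc x⁻¹ = x⁻¹ * 1 := (mul_one _).symm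
    _ ≤ x⁻¹ * (2 * (1 - r) * x) :=
        mul_le_mul_of_nonneg_left h8 (inv_nonneg.mpr hxpos.le)
    _ = 2 * (1 - r) := hcalc
  · have hle : hDist w 0 ≤ Real.log (2 * x) := hd ▸ arcosh_le_log hx1
    have hexp : Real.exp (hDist w 0) ≤ 2 * x := by
      calc Real.exp (hDist w 0) ≤ Real.exp (Real.log (2 * x)) := Real.exp_le_exp.mpr hle
      _ = 2 * x := Real.exp_log (by positivity)
    set E := Real.exp (-hDist w 0) with hEdef
    have hEpos : 0 < E := Real.exp_pos _
    have hprod : E * (2 * x) ≥ 1 := by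
      have : E * Real.exp (hDist w 0) = 1 := by
        rw [hEdef, ← Real.exp_add]; simp
      nlinarith [mul_le_mul_of_nonneg_left hexp hEpos.le]
    have hxle : (1 - r) * x ≤ 2 := by
      have h9 : (1 - r) * x * (1 - r ^ 2) = (1 - r) * (1 + r ^ 2) := by
        rw [mul_assoc, hxeq]
      nlinarith [sq_nonneg r, sq_nonneg (1 - r)]
    calc 1 - r ≤ (1 - r) * (E * (2 * x)) :=
          le_mul_of_one_le_right (by linarith) hprod
    _ = 2 * E * ((1 - r) * x) := by ring
    _ ≤ 2 * E * 2 := by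
        apply mul_le_mul_of_nonneg_left hxle (by positivity)
    _ = 4 * E := by ring

lemma orbit_mem_ball {n : ℕ} {G : Subgroup (Equiv.Perm (Pt n))} (hG : IsKleinian G)
    (g : G) : ‖(g : Equiv.Perm (Pt n)) 0‖ < 1 := by
  have h0 : (0 : Pt n) ∈ Ball n := by
    simp [Ball, Metric.mem_ball]
  have := hG.1 (g : Equiv.Perm (Pt n)) g.2 h0
  simpa [Ball, mem_ball_zero_iff] using this

lemma hDist_orbit_nonneg {n : ℕ} {G : Subgroup (Equiv.Perm (Pt n))} (hG : IsKleinian G)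
    (g : G) : 0 ≤ hDist ((g : Equiv.Perm (Pt n)) 0) 0 :=
  (hDist_est (orbit_mem_ball hG g)).1

lemma hDist_inv_mul {n : ℕ} {G : Subgroup (Equiv.Perm (Pt n))} (hG : IsKleinian G)
    (g h : G) :
    hDist (((h⁻¹ * g : G) : Equiv.Perm (Pt n)) 0) 0
      = hDist ((g : Equiv.Perm (Pt n)) 0) ((h : Equiv.Perm (Pt n)) 0) := by
  have h0 : (0 : Pt n) ∈ Ball n := by simp [Ball, Metric.mem_ball]
  have hg0 : (g : Equiv.Perm (Pt n)) 0 ∈ Ball n := hG.1 _ g.2 h0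
  have hh0 : (h : Equiv.Perm (Pt n)) 0 ∈ Ball n := hG.1 _ h.2 h0
  have hinv := hG.2.2.2.1 ((h : Equiv.Perm (Pt n))⁻¹) (by
    simpa using G.inv_mem h.2) _ hg0 _ hh0
  have e1 : ((h⁻¹ * g : G) : Equiv.Perm (Pt n)) 0
      = ((h : Equiv.Perm (Pt n))⁻¹) ((g : Equiv.Perm (Pt n)) 0) := by
    simp [Equiv.Perm.mul_apply]
  have e2 : ((h : Equiv.Perm (Pt n))⁻¹) ((h : Equiv.Perm (Pt n)) 0) = 0 :=
    Equiv.symm_apply_apply _ _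
  rw [e2] at hinv
  rw [e1]
  exact hinv

lemma countable_of_kleinian {n : ℕ} {G : Subgroup (Equiv.Perm (Pt n))}
    (hG : IsKleinian G) : Countable G := by
  rw [← Set.countable_univ_iff]
  have huniv : (Set.univ : Set G)
      = ⋃ k : ℕ, {g : G | hDist ((g : Equiv.Perm (Pt n)) 0) 0 ≤ (k : ℝ)} := by
    ext g
    simp only [Set.mem_univ, Set.mem_iUnion, Set.mem_setOf_eq, true_iff]
    exact ⟨⌈hDist ((g : Equiv.Perm (Pt n)) 0) 0⌉₊, Nat.le_ceil _⟩
  rw [huniv]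
  exact Set.countable_iUnion fun k => (hG.2.2.2.2 (k : ℝ)).countable

/-- Key separation estimate: if two small Euclidean balls around orbit points overlap,
the corresponding group elements differ by an element moving `0` a bounded distance. -/
lemma overlap_arith {ru rv D : ℝ} (h0u : 0 ≤ ru) (h0v : 0 ≤ rv) (hu : ru < 1)
    (hv : rv < 1) (hD : 0 ≤ D) (habs : |ru - rv| ≤ D)
    (hdd : D < (1 - ru) / 4 + (1 - rv) / 4) :
    1 ≤ 1 + 2 * D ^ 2 / ((1 - ru ^ 2) * (1 - rv ^ 2)) ∧
      1 + 2 * D ^ 2 / ((1 - ru ^ 2) * (1 - rv ^ 2)) ≤ 5 / 2 := by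
  obtain ⟨ha1, ha2⟩ := abs_le.mp habs
  have hb1 : 1 - rv ≤ (5 / 3) * (1 - ru) := by linarith
  have hb2 : (3 / 5) * (1 - ru) ≤ 1 - rv := by linarith
  have hdle : D ≤ (2 / 3) * (1 - ru) := by linarith
  have hpu : (0 : ℝ) < 1 - ru ^ 2 := by nlinarith
  have hpv : (0 : ℝ) < 1 - rv ^ 2 := by nlinarith
  have hPpos : (0 : ℝ) < (1 - ru ^ 2) * (1 - rv ^ 2) := mul_pos hpu hpv
  have hP1 : (1 - ru) ≤ 1 - ru ^ 2 := by nlinarith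
  have hP2 : (1 - rv) ≤ 1 - rv ^ 2 := by nlinarith
  have hprod : (1 - ru) * (1 - rv) ≤ (1 - ru ^ 2) * (1 - rv ^ 2) :=
    mul_le_mul hP1 hP2 (by linarith) (by linarith)
  have hfac : (3 / 5) * (1 - ru) ^ 2 ≤ (1 - ru) * (1 - rv) := by
    nlinarith [mul_le_mul_of_nonneg_left hb2 (show (0:ℝ) ≤ 1 - ru by linarith)]
  have hP : (3 / 5) * (1 - ru) ^ 2 ≤ (1 - ru ^ 2) * (1 - rv ^ 2) := hfac.trans hprod
  have hnum : 2 * D ^ 2 ≤ (8 / 9) * (1 - ru) ^ 2 := by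
    nlinarith [mul_le_mul hdle hdle hD (by linarith : (0:ℝ) ≤ (2/3) * (1 - ru))]
  constructor
  · have : 0 ≤ 2 * D ^ 2 / ((1 - ru ^ 2) * (1 - rv ^ 2)) := by positivity
    linarith
  · have hkey : 2 * D ^ 2 / ((1 - ru ^ 2) * (1 - rv ^ 2)) ≤ 3 / 2 := by
      rw [div_le_iff₀ hPpos]
      nlinarith [sq_nonneg (1 - ru)]
    linarith

lemma overlap_bound {n : ℕ} {G : Subgroup (Equiv.Perm (Pt n))} (hG : IsKleinian G)
    {g h : G} {x : Pt n}
    (hx : dist x ((g : Equiv.Perm (Pt n)) 0) < (1 - ‖(g : Equiv.Perm (Pt n)) 0‖) / 4)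
    (hy : dist x ((h : Equiv.Perm (Pt n)) 0) < (1 - ‖(h : Equiv.Perm (Pt n)) 0‖) / 4) :
    hDist (((h⁻¹ * g : G) : Equiv.Perm (Pt n)) 0) 0 ≤ 2 := by
  set u := (g : Equiv.Perm (Pt n)) 0 with hu
  set v := (h : Equiv.Perm (Pt n)) 0 with hv
  have hru : ‖u‖ < 1 := orbit_mem_ball hG g
  have hrv : ‖v‖ < 1 := orbit_mem_ball hG h
  have hdd : dist u v < (1 - ‖u‖) / 4 + (1 - ‖v‖) / 4 := by
    calc dist u v ≤ dist u x + dist x v := dist_triangle u x v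
    _ < (1 - ‖u‖) / 4 + (1 - ‖v‖) / 4 := by
        rw [dist_comm u x]; exact add_lt_add hx hy
  have habs : |‖u‖ - ‖v‖| ≤ dist u v := abs_norm_sub_norm_le u v
  obtain ⟨har1, har2⟩ := overlap_arith (norm_nonneg u) (norm_nonneg v) hru hrv
    dist_nonneg habs hdd
  rw [hDist_inv_mul hG g h]
  show hDist u v ≤ 2
  unfold hDist
  exact arcosh_le_two har1 har2

/-- Discreteness plus a packing argument: the Poincaré series converges at `s = n + 1`. -/
lemma summable_poincare_dim {n : ℕ} (G : Subgroup (Equiv.Perm (Pt n)))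
    (hG : IsKleinian G) : poincareSummable G ((n : ℝ) + 1) := by
  classical
  haveI hcnt : Countable G := countable_of_kleinian hG
  set a : G → ℝ := fun g => 1 - ‖(g : Equiv.Perm (Pt n)) 0‖ with ha
  have hapos : ∀ g : G, 0 < a g := fun g => by
    have := orbit_mem_ball hG g
    simp only [ha]; linarith
  set E : G → Set (Pt n) := fun g => Metric.ball ((g : Equiv.Perm (Pt n)) 0) (a g / 4)
    with hE
  have hF : {γ : G | hDist ((γ : Equiv.Perm (Pt n)) 0) 0 ≤ 2}.Finite := hG.2.2.2.2 2
  haveI hFt : Fintype ↥{γ : G | hDist ((γ : Equiv.Perm (Pt n)) 0) 0 ≤ 2} := hF.fintype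
  set N : ℕ := Fintype.card ↥{γ : G | hDist ((γ : Equiv.Perm (Pt n)) 0) 0 ≤ 2} with hN
  -- multiplicity bound
  have hmult : ∀ x : Pt n,
      (∑' g : G, (E g).indicator (fun _ => (1 : ENNReal)) x) ≤ N := by
    intro x
    set S : Set G := {g : G | x ∈ E g} with hS
    have hrw : (fun g : G => (E g).indicator (fun _ => (1 : ENNReal)) x)
        = fun g : G => S.indicator (fun _ => (1 : ENNReal)) g := by
      funext g
      by_cases hx : x ∈ E g
      · rw [Set.indicator_of_mem hx, Set.indicator_of_mem (by exact hx)]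
      · rw [Set.indicator_of_notMem hx, Set.indicator_of_notMem (by exact hx)]
    rw [hrw, ← tsum_subtype]
    by_cases hne : S.Nonempty
    · obtain ⟨h, hh⟩ := hne
      have hmem : ∀ g : ↥S,
          (h⁻¹ * (g : G)) ∈ {γ : G | hDist ((γ : Equiv.Perm (Pt n)) 0) 0 ≤ 2} := by
        rintro ⟨g, hg⟩
        exact overlap_bound hG (by simpa [hS, hE, Metric.mem_ball] using hg)
          (by simpa [hS, hE, Metric.mem_ball] using hh)
      set emb : ↥S → ↥{γ : G | hDist ((γ : Equiv.Perm (Pt n)) 0) 0 ≤ 2} :=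
        fun g => ⟨h⁻¹ * (g : G), hmem g⟩ with hemb
      have hinj : Function.Injective emb := by
        rintro ⟨g₁, h₁⟩ ⟨g₂, h₂⟩ hgg
        have : h⁻¹ * g₁ = h⁻¹ * g₂ := congrArg Subtype.val hgg
        exact Subtype.ext (mul_left_cancel this)
      calc (∑' _ : ↥S, (1 : ENNReal))
          = ∑' g : ↥S, (fun _ : ↥{γ : G | hDist ((γ : Equiv.Perm (Pt n)) 0) 0 ≤ 2} =>
              (1 : ENNReal)) (emb g) := rfl
      _ ≤ ∑' _ : ↥{γ : G | hDist ((γ : Equiv.Perm (Pt n)) 0) 0 ≤ 2}, (1 : ENNReal) :=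
          ENNReal.tsum_comp_le_tsum_of_injective hinj _
      _ = N := by
          rw [tsum_fintype]
          simp [hN]
    · rw [Set.not_nonempty_iff_eq_empty.mp hne]
      simp
  -- volume bound
  have hEmeas : ∀ g : G, MeasurableSet (E g) := fun g => measurableSet_ball
  have hsub1 : ∀ g : G, E g ⊆ Metric.ball (0 : Pt n) 1 := by
    intro g y hy
    rw [Metric.mem_ball, dist_zero_right] at *
    have h1 : dist y ((g : Equiv.Perm (Pt n)) 0) < a g / 4 := hy
    have h2 := orbit_mem_ball hG g
    calc ‖y‖ ≤ dist y ((g : Equiv.Perm (Pt n)) 0) + ‖(g : Equiv.Perm (Pt n)) 0‖ := by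
          rw [dist_eq_norm]
          simpa using norm_add_le (y - (g : Equiv.Perm (Pt n)) 0) ((g : Equiv.Perm (Pt n)) 0)
    _ < a g / 4 + ‖(g : Equiv.Perm (Pt n)) 0‖ := by linarith
    _ ≤ 1 := by simp only [ha]; linarith [hapos g]
  set V : ENNReal := volume (Metric.ball (0 : Pt n) 1) with hV
  have hVpos : 0 < V := measure_ball_pos _ _ one_pos
  have hVfin : V ≠ ⊤ := measure_ball_lt_top.ne
  have key : (∑' g : G, volume (E g)) ≤ (N : ENNReal) * V := by
    calc (∑' g : G, volume (E g))
        = ∑' g : G, ∫⁻ x, (E g).indicator (fun _ => (1 : ENNReal)) x := by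
          exact tsum_congr fun g => (lintegral_indicator_one (hEmeas g)).symm
    _ = ∫⁻ x, ∑' g : G, (E g).indicator (fun _ => (1 : ENNReal)) x :=
        (lintegral_tsum fun g =>
          ((measurable_const.indicator (hEmeas g)).aemeasurable)).symm
    _ ≤ ∫⁻ x, (Metric.ball (0 : Pt n) 1).indicator (fun _ => (N : ENNReal)) x := by
        refine lintegral_mono fun x => ?_
        by_cases hx : x ∈ Metric.ball (0 : Pt n) 1
        · rw [Set.indicator_of_mem hx]
          exact hmult x
        · rw [Set.indicator_of_notMem hx]
          have : ∀ g : G, (E g).indicator (fun _ => (1 : ENNReal)) x = 0 := fun g =>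
            Set.indicator_of_notMem (fun hxe => hx (hsub1 g hxe)) _
          simp [this]
    _ = (N : ENNReal) * V := by
        rw [lintegral_indicator_const measurableSet_ball]
  have hvol : ∀ g : G, volume (E g) = ENNReal.ofReal ((a g / 4) ^ (n + 1)) * V := by
    intro g
    have := Measure.addHaar_ball (volume : Measure (Pt n)) ((g : Equiv.Perm (Pt n)) 0)
      (div_nonneg (hapos g).le (by norm_num : (0:ℝ) ≤ 4))
    rw [hE]
    simpa [finrank_euclideanSpace, hV] using this
  have key2 : (∑' g : G, ENNReal.ofReal ((a g / 4) ^ (n + 1))) ≤ (N : ENNReal) := by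
    have h1 : (∑' g : G, ENNReal.ofReal ((a g / 4) ^ (n + 1))) * V ≤ (N : ENNReal) * V := by
      rw [← ENNReal.tsum_mul_right]
      calc (∑' g : G, ENNReal.ofReal ((a g / 4) ^ (n + 1)) * V)
          = ∑' g : G, volume (E g) := by
            refine tsum_congr fun g => ?_
            rw [hvol g]
      _ ≤ (N : ENNReal) * V := key
    exact (ENNReal.mul_le_mul_iff_left hVpos.ne' hVfin).mp h1
  have hne : (∑' g : G, ENNReal.ofReal ((a g / 4) ^ (n + 1))) ≠ ⊤ :=
    (key2.trans_lt (ENNReal.natCast_lt_top N)).ne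
  have hsummable : Summable (fun g : G => (a g / 4) ^ (n + 1)) := by
    have h1 := ENNReal.summable_toReal hne
    refine h1.congr fun g => ?_
    rw [ENNReal.toReal_ofReal (pow_nonneg (div_nonneg (hapos g).le (by norm_num : (0:ℝ) ≤ 4)) _)]
  -- comparison
  unfold poincareSummable
  have hcomp : ∀ g : G,
      Real.exp (-((n : ℝ) + 1) * hDist ((g : Equiv.Perm (Pt n)) 0) 0)
        ≤ (8 : ℝ) ^ (n + 1) * (a g / 4) ^ (n + 1) := by
    intro g
    have hest := hDist_est (orbit_mem_ball hG g)
    have hexp : Real.exp (-((n : ℝ) + 1) * hDist ((g : Equiv.Perm (Pt n)) 0) 0)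
        = Real.exp (-hDist ((g : Equiv.Perm (Pt n)) 0) 0) ^ (n + 1) := by
      rw [← Real.exp_nat_mul]
      congr 1
      push_cast
      ring
    rw [hexp]
    calc Real.exp (-hDist ((g : Equiv.Perm (Pt n)) 0) 0) ^ (n + 1)
        ≤ (2 * a g) ^ (n + 1) := by
          apply pow_le_pow_left₀ (Real.exp_pos _).le
          simpa [ha] using hest.2.1
    _ = (8 : ℝ) ^ (n + 1) * (a g / 4) ^ (n + 1) := by
        rw [← mul_pow]
        congr 1
        ring
  refine Summable.of_nonneg_of_le (fun g => (Real.exp_pos _).le) hcomp ?_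
  exact (hsummable.mul_left _)

/-- The shadow is a metric ball, so its diameter is controlled. -/
lemma ediam_Ishadow {n : ℕ} (w : Pt n) (c α : ℝ) :
    EMetric.diam (Ishadow w c α) ≤ ENNReal.ofReal (2 * (c * (1 - ‖w‖) ^ α)) := by
  have hball : Ishadow w c α = Metric.ball ((‖w‖)⁻¹ • w) (c * (1 - ‖w‖) ^ α) := rfl
  rw [hball, ← Metric.emetric_ball]
  refine le_trans EMetric.diam_ball ?_
  rw [ENNReal.ofReal_mul (by norm_num : (0:ℝ) ≤ 2)]
  gcongr
  simp

/-- The core covering estimate: dimension bound for a single `limsup` of shadows. -/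
lemma dimH_shadow_limsup_le {n : ℕ} (G : Subgroup (Equiv.Perm (Pt n)))
    (hG : IsKleinian G) (κ : ℝ) (hκ : κ ∈ Set.Icc (0 : ℝ) 1) {s : ℝ} (hs : 0 < s)
    (hsum : poincareSummable G s) (c : ℝ) (hc : 0 < c) :
    dimH {ξ : Pt n |
        {g : G | ξ ∈ Ishadow ((g : Equiv.Perm (Pt n)) 0) c (1 / (1 + κ))}.Infinite}
      ≤ ENNReal.ofReal ((1 + κ) * s) := by
  classical
  haveI : Countable G := countable_of_kleinian hG
  obtain ⟨hκ0, hκ1⟩ := hκ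
  have hκpos : (0 : ℝ) < 1 + κ := by linarith
  set α : ℝ := 1 / (1 + κ) with hα
  have hαpos : 0 < α := by positivity
  set t : ℝ := (1 + κ) * s with ht
  have htpos : 0 < t := by positivity
  have hαt : α * t = s := by
    rw [hα, ht]
    field_simp
  set d : G → ℝ := fun g => hDist ((g : Equiv.Perm (Pt n)) 0) 0 with hd
  have hdnn : ∀ g : G, 0 ≤ d g := fun g => hDist_orbit_nonneg hG g
  set EE : Set (Pt n) :=
    {ξ : Pt n | {g : G | ξ ∈ Ishadow ((g : Equiv.Perm (Pt n)) 0) c α}.Infinite} with hEE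
  -- pointwise diameter bound
  have hdiam : ∀ g : G,
      EMetric.diam (Ishadow ((g : Equiv.Perm (Pt n)) 0) c α)
        ≤ ENNReal.ofReal (2 * (c * ((4:ℝ) ^ α * Real.exp (-(d g) * α)))) := by
    intro g
    refine (ediam_Ishadow _ _ _).trans ?_
    apply ENNReal.ofReal_le_ofReal
    have h1 : (0:ℝ) ≤ 1 - ‖(g : Equiv.Perm (Pt n)) 0‖ :=
      le_of_lt (by linarith [orbit_mem_ball hG g])
    have h2 : (1 - ‖(g : Equiv.Perm (Pt n)) 0‖ : ℝ) ≤ 4 * Real.exp (-(d g)) :=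
      (hDist_est (orbit_mem_ball hG g)).2.2
    have h3 : (1 - ‖(g : Equiv.Perm (Pt n)) 0‖ : ℝ) ^ α
        ≤ (4 * Real.exp (-(d g))) ^ α := Real.rpow_le_rpow h1 h2 hαpos.le
    have h4 : ((4:ℝ) * Real.exp (-(d g))) ^ α
        = (4:ℝ) ^ α * Real.exp (-(d g) * α) := by
      rw [Real.mul_rpow (by norm_num) (Real.exp_nonneg _), ← Real.exp_mul]
    rw [h4] at h3
    have := mul_le_mul_of_nonneg_left h3 hc.le
    linarith
  -- apply the covering lemma
  have hcov : μH[t] EE ≤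
      ENNReal.ofReal ((2 * (c * (4:ℝ) ^ α)) ^ t) *
        ENNReal.ofReal (∑' g : G, Real.exp (-s * d g)) := by
    set r : ℕ → ENNReal :=
      fun m => ENNReal.ofReal (2 * (c * ((4:ℝ) ^ α * Real.exp (-(m:ℝ) * α)))) with hrr
    have hr0 : Filter.Tendsto r Filter.atTop (nhds 0) := by
      rw [show (0 : ENNReal) = ENNReal.ofReal (2 * (c * ((4:ℝ) ^ α * 0))) by simp]
      apply ENNReal.tendsto_ofReal
      have hexp : Filter.Tendsto (fun m : ℕ => Real.exp (-(m:ℝ) * α)) Filter.atTop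
          (nhds 0) := by
        apply Real.tendsto_exp_atBot.comp
        have hb : Filter.Tendsto (fun m : ℕ => (m : ℝ) * (-α)) Filter.atTop
            Filter.atBot :=
          Filter.Tendsto.atTop_mul_const_of_neg (by linarith)
            (tendsto_natCast_atTop_atTop)
        exact hb.congr fun m => by ring
      exact ((hexp.const_mul ((4:ℝ) ^ α)).const_mul c).const_mul 2
    have hmain := Measure.hausdorffMeasure_le_liminf_tsum (X := Pt n) t EE r hr0
      (fun m (i : {g : G // (m : ℝ) ≤ d g}) =>
        Ishadow (((i : G) : Equiv.Perm (Pt n)) 0) c α)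
      (by
        apply Filter.Eventually.of_forall
        rintro m ⟨g, hg⟩
        refine (hdiam g).trans ?_
        apply ENNReal.ofReal_le_ofReal
        have : Real.exp (-(d g) * α) ≤ Real.exp (-(m:ℝ) * α) := by
          apply Real.exp_le_exp.mpr
          have := mul_le_mul_of_nonneg_right (neg_le_neg hg) hαpos.le
          linarith
        have h2 := mul_le_mul_of_nonneg_left this
          (mul_nonneg (by norm_num : (0:ℝ) ≤ 2)
            (mul_nonneg hc.le (Real.rpow_nonneg (by norm_num : (0:ℝ) ≤ 4) α)))
        calc 2 * (c * (4 ^ α * Real.exp (-(d g) * α)))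
            = 2 * (c * 4 ^ α) * Real.exp (-(d g) * α) := by ring
        _ ≤ 2 * (c * 4 ^ α) * Real.exp (-(m:ℝ) * α) := by
            calc 2 * (c * 4 ^ α) * Real.exp (-(d g) * α)
                = 2 * c * 4 ^ α * Real.exp (-(d g) * α) := by ring
            _ ≤ 2 * c * 4 ^ α * Real.exp (-(m:ℝ) * α) := by
                simpa [mul_assoc] using h2
            _ = 2 * (c * 4 ^ α) * Real.exp (-(m:ℝ) * α) := by ring
        _ = 2 * (c * (4 ^ α * Real.exp (-(m:ℝ) * α))) := by ring)
      (by
        apply Filter.Eventually.of_forall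
        intro m
        intro ξ hξ
        have hfin : {g : G | d g ≤ (m : ℝ)}.Finite := hG.2.2.2.2 (m : ℝ)
        obtain ⟨g, hg1, hg2⟩ := (hξ.diff hfin).nonempty
        refine Set.mem_iUnion.mpr ⟨⟨g, le_of_lt (not_le.mp hg2)⟩, hg1⟩)
    refine hmain.trans ?_
    have hbound : ∀ m : ℕ,
        (∑' i : {g : G // (m : ℝ) ≤ d g},
          EMetric.diam (Ishadow (((i : G) : Equiv.Perm (Pt n)) 0) c α) ^ t)
        ≤ ENNReal.ofReal ((2 * (c * (4:ℝ) ^ α)) ^ t) *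
            ENNReal.ofReal (∑' g : G, Real.exp (-s * d g)) := by
      intro m
      have hterm : ∀ g : G,
          EMetric.diam (Ishadow ((g : Equiv.Perm (Pt n)) 0) c α) ^ t
            ≤ ENNReal.ofReal ((2 * (c * (4:ℝ) ^ α)) ^ t * Real.exp (-s * d g)) := by
        intro g
        have h1 := ENNReal.rpow_le_rpow (hdiam g) htpos.le
        refine h1.trans ?_
        rw [ENNReal.ofReal_rpow_of_nonneg (by positivity) htpos.le]
        apply ENNReal.ofReal_le_ofReal
        have heq : (2 * (c * ((4:ℝ) ^ α * Real.exp (-(d g) * α)))) ^ t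
            = (2 * (c * (4:ℝ) ^ α)) ^ t * (Real.exp (-(d g) * α)) ^ t := by
          rw [← Real.mul_rpow (by positivity) (Real.exp_nonneg _)]
          congr 1
          ring
        rw [heq]
        have hexp : (Real.exp (-(d g) * α)) ^ t = Real.exp (-s * d g) := by
          rw [← Real.exp_mul]
          congr 1
          rw [← hαt]
          ring
        rw [hexp]
      calc (∑' i : {g : G // (m : ℝ) ≤ d g},
            EMetric.diam (Ishadow (((i : G) : Equiv.Perm (Pt n)) 0) c α) ^ t)
          ≤ ∑' i : {g : G // (m : ℝ) ≤ d g},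
              ENNReal.ofReal ((2 * (c * (4:ℝ) ^ α)) ^ t * Real.exp (-s * d (i : G))) :=
            ENNReal.tsum_le_tsum fun i => hterm (i : G)
      _ ≤ ∑' g : G,
            ENNReal.ofReal ((2 * (c * (4:ℝ) ^ α)) ^ t * Real.exp (-s * d g)) :=
          ENNReal.tsum_comp_le_tsum_of_injective Subtype.val_injective _
      _ = ENNReal.ofReal ((2 * (c * (4:ℝ) ^ α)) ^ t) *
            ∑' g : G, ENNReal.ofReal (Real.exp (-s * d g)) := by
          rw [← ENNReal.tsum_mul_left]
          refine tsum_congr fun g => ?_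
          rw [ENNReal.ofReal_mul (by positivity)]
      _ = ENNReal.ofReal ((2 * (c * (4:ℝ) ^ α)) ^ t) *
            ENNReal.ofReal (∑' g : G, Real.exp (-s * d g)) := by
          rw [ENNReal.ofReal_tsum_of_nonneg (fun g => (Real.exp_pos _).le) hsum]
    calc Filter.liminf (fun m : ℕ => ∑' i : {g : G // (m : ℝ) ≤ d g},
          EMetric.diam (Ishadow (((i : G) : Equiv.Perm (Pt n)) 0) c α) ^ t)
          Filter.atTop
        ≤ Filter.liminf (fun _ : ℕ => ENNReal.ofReal ((2 * (c * (4:ℝ) ^ α)) ^ t) *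
            ENNReal.ofReal (∑' g : G, Real.exp (-s * d g))) Filter.atTop :=
          Filter.liminf_le_liminf (Filter.Eventually.of_forall hbound)
    _ = _ := Filter.liminf_const _
  -- conclude
  have hfin : μH[t] EE ≠ ⊤ :=
    (hcov.trans_lt (by
      apply ENNReal.mul_lt_top
      · exact ENNReal.ofReal_lt_top
      · exact ENNReal.ofReal_lt_top)).ne
  have hnn : ((t.toNNReal : ℝ)) = t := Real.coe_toNNReal _ htpos.le
  have hd2 : μH[(t.toNNReal : ℝ)] EE ≠ ⊤ := by rw [hnn]; exact hfin
  have := dimH_le_of_hausdorffMeasure_ne_top hd2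
  rwa [show ((t.toNNReal : ENNReal)) = ENNReal.ofReal t from rfl] at this

end Aux

/-- the Hausdorff dimension of the κ-shadow limit set `L_r^{(κ)}(G)` is at
most `(1+κ) δ(G)`. -/
theorem dimH_shadowLimitSet_le {n : ℕ} (G : Subgroup (Equiv.Perm (Pt n)))
    (hG : IsKleinian G) (κ : ℝ) (hκ : κ ∈ Set.Icc (0 : ℝ) 1) :
    dimH (shadowLimitSet G κ) ≤ ENNReal.ofReal ((1 + κ) * critExp G) := by
  classical
  obtain ⟨hκ0, hκ1⟩ := hκ
  have hκpos : (0 : ℝ) < 1 + κ := by linarith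
  set T : Set ℝ := {s : ℝ | 0 < s ∧ poincareSummable G s} with hT
  have hTne : T.Nonempty := ⟨(n : ℝ) + 1, by positivity, summable_poincare_dim G hG⟩
  have hTbdd : ∀ s ∈ T, (0 : ℝ) ≤ s := fun s hs => hs.1.le
  have hδ : critExp G = sInf T := rfl
  -- the shadow limit set is contained in a countable union over integer radii
  have hsub : shadowLimitSet G κ ⊆ ⋃ m : ℕ,
      {ξ : Pt n | {g : G |
        ξ ∈ Ishadow ((g : Equiv.Perm (Pt n)) 0) ((m : ℝ) + 1) (1 / (1 + κ))}.Infinite} := by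
    rintro ξ ⟨hsph, c, hc, hinf⟩
    refine Set.mem_iUnion.mpr ⟨⌈c⌉₊, ?_⟩
    refine hinf.mono fun g hg => ?_
    simp only [Set.mem_setOf_eq, Ishadow] at hg ⊢
    refine lt_of_lt_of_le hg ?_
    apply mul_le_mul_of_nonneg_right
    · exact (Nat.le_ceil c).trans (by linarith)
    · apply Real.rpow_nonneg
      linarith [orbit_mem_ball hG g]
  -- conclude via `ε`-approximation of the critical exponent
  refine ENNReal.le_of_forall_pos_le_add fun ε hε _ => ?_
  have hεr : (0 : ℝ) < (ε : ℝ) / (2 * (1 + κ)) := by positivity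
  obtain ⟨s, hsT, hslt⟩ := Real.lt_sInf_add_pos hTne hεr
  have hdim : dimH (shadowLimitSet G κ) ≤ ENNReal.ofReal ((1 + κ) * s) := by
    refine (dimH_mono hsub).trans ?_
    rw [dimH_iUnion]
    refine iSup_le fun m => ?_
    exact dimH_shadow_limsup_le G hG κ ⟨hκ0, hκ1⟩ hsT.1 hsT.2 ((m : ℝ) + 1)
      (by positivity)
  refine hdim.trans ?_
  have h1 : (1 + κ) * s ≤ (1 + κ) * critExp G + (ε : ℝ) / 2 := by
    rw [hδ]
    have h2 : (1 + κ) * s < (1 + κ) * (sInf T + (ε : ℝ) / (2 * (1 + κ))) :=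
      (mul_lt_mul_iff_right₀ hκpos).mpr hslt
    have h3 : (1 + κ) * ((ε : ℝ) / (2 * (1 + κ))) = (ε : ℝ) / 2 := by
      field_simp
    nlinarith
  calc ENNReal.ofReal ((1 + κ) * s)
      ≤ ENNReal.ofReal ((1 + κ) * critExp G + (ε : ℝ) / 2) := ENNReal.ofReal_le_ofReal h1
  _ ≤ ENNReal.ofReal ((1 + κ) * critExp G) + ENNReal.ofReal ((ε : ℝ) / 2) :=
      ENNReal.ofReal_add_le
  _ ≤ ENNReal.ofReal ((1 + κ) * critExp G) + ε := by
      gcongr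
      calc ENNReal.ofReal ((ε : ℝ) / 2) ≤ ENNReal.ofReal (ε : ℝ) :=
          ENNReal.ofReal_le_ofReal (by linarith [ε.coe_nonneg])
      _ = (ε : ENNReal) := ENNReal.ofReal_coe_nnreal
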